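/- arXiv:2401.15655 — 4 statements merged into one kernel-verified Lean document; each statement's English description precedes it below -/
import Mathlib

section
/- Let G and H be groups, and suppose every finite subgroup of G has a normal abelian subgroup of index at most m, and every finite subgroup of H has a normal abelian subgroup of index at most n. Then every finite subgroup of G × H has a normal abelian subgroup of index at most m·n, and this bound is attained if m and n are attained in G and H respectively. -/
/-!
Let `K ≤ G × H` be finite with projections `K₁ ≤ G`, `K₂ ≤ H`. Since `K` embeds in `K₁ × K₂`, the
preimage of `A₁ × A₂`, for normal abelian `A₁ ◁ K₁` and `A₂ ◁ K₂`, is normal abelian in `K` of index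
at most `[K₁ : A₁] [K₂ : A₂]`. Conversely, a normal abelian `A ◁ K₁ × K₂` lies in the product of its
two projections, which are normal abelian, so `[K₁ × K₂ : A]` is at least the product of their
indices; for extremal `K₁`, `K₂` this is at least `m n`.
-/

namespace Subgroup

variable {G G' : Type*} [Group G] [Group G']

instance isMulCommutative_prod (H : Subgroup G) (K : Subgroup G') [IsMulCommutative H]
    [IsMulCommutative K] : IsMulCommutative (H.prod K) :=
  .of_setLike_mul_comm fun a ha b hb ↦
    Prod.ext (congrArg Subtype.val (mul_comm' (⟨a.1, ha.1⟩ : H) ⟨b.1, hb.1⟩))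
      (congrArg Subtype.val (mul_comm' (⟨a.2, ha.2⟩ : K) ⟨b.2, hb.2⟩))

instance finiteIndex_prod (H : Subgroup G) (K : Subgroup G') [H.FiniteIndex] [K.FiniteIndex] :
    (H.prod K).FiniteIndex :=
  ⟨index_prod H K ▸ mul_ne_zero FiniteIndex.index_ne_zero FiniteIndex.index_ne_zero⟩

theorem index_comap_le (H : Subgroup G) [H.FiniteIndex] (f : G' →* G) :
    (H.comap f).index ≤ H.index := by
  rw [index_comap, ← relIndex_top_right]
  exact relIndex_le_of_le_right le_top (by rw [relIndex_top_right]; exact FiniteIndex.index_ne_zero)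

theorem index_map_fst_mul_index_map_snd_le (A : Subgroup (G × G')) [A.FiniteIndex] :
    (A.map (MonoidHom.fst G G')).index * (A.map (MonoidHom.snd G G')).index ≤ A.index := by
  rw [← index_prod]
  exact index_antitone (le_prod_iff.2 ⟨le_rfl, le_rfl⟩)

def toProdMapFstSnd (K : Subgroup (G × G')) :
    K →* K.map (MonoidHom.fst G G') × K.map (MonoidHom.snd G G') :=
  ((MonoidHom.fst G G').subgroupMap K).prod ((MonoidHom.snd G G').subgroupMap K)

theorem toProdMapFstSnd_injective (K : Subgroup (G × G')) :
    Function.Injective K.toProdMapFstSnd := fun _ _ h ↦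
  Subtype.ext (Prod.ext (congrArg (Subtype.val ∘ Prod.fst) h) (congrArg (Subtype.val ∘ Prod.snd) h))

end Subgroup

open Subgroup

theorem exists_normal_isMulCommutative_index_le_of_injective {K Q₁ Q₂ : Type*} [Group K]
    [Group Q₁] [Group Q₂] (ψ : K →* Q₁ × Q₂) (hψ : Function.Injective ψ)
    (A₁ : Subgroup Q₁) (A₂ : Subgroup Q₂) [A₁.Normal] [A₂.Normal] [IsMulCommutative A₁]
    [IsMulCommutative A₂] [A₁.FiniteIndex] [A₂.FiniteIndex] :
    ∃ A : Subgroup K, A.Normal ∧ IsMulCommutative A ∧ A.index ≤ A₁.index * A₂.index :=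
  ⟨(A₁.prod A₂).comap ψ, inferInstance, comap_injective_isMulCommutative (H := A₁.prod A₂) hψ,
    (index_comap_le _ ψ).trans_eq (index_prod A₁ A₂)⟩

theorem le_index_of_normal_isMulCommutative_prod {Q₁ Q₂ : Type*} [Group Q₁] [Group Q₂]
    [Finite Q₁] [Finite Q₂] {m n : ℕ}
    (h₁ : ∀ A : Subgroup Q₁, A.Normal → IsMulCommutative A → m ≤ A.index)
    (h₂ : ∀ A : Subgroup Q₂, A.Normal → IsMulCommutative A → n ≤ A.index)
    (A : Subgroup (Q₁ × Q₂)) [A.Normal] [IsMulCommutative A] : m * n ≤ A.index :=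
  calc m * n
      ≤ (A.map (MonoidHom.fst Q₁ Q₂)).index * (A.map (MonoidHom.snd Q₁ Q₂)).index :=
        Nat.mul_le_mul (h₁ _ (Normal.map ‹_› _ Prod.fst_surjective) inferInstance)
          (h₂ _ (Normal.map ‹_› _ Prod.snd_surjective) inferInstance)
    _ ≤ A.index := index_map_fst_mul_index_map_snd_le A

/-- Jordan constants multiply under direct products. -/
theorem jordan_constant_prod {G H : Type*} [Group G] [Group H] (m n : ℕ)
    (hG : ∀ K : Subgroup G, (K : Set G).Finite →
      ∃ A : Subgroup ↥K, A.Normal ∧ IsMulCommutative ↥A ∧ A.index ≤ m)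
    (hH : ∀ K : Subgroup H, (K : Set H).Finite →
      ∃ A : Subgroup ↥K, A.Normal ∧ IsMulCommutative ↥A ∧ A.index ≤ n) :
    (∀ K : Subgroup (G × H), (K : Set (G × H)).Finite →
      ∃ A : Subgroup ↥K, A.Normal ∧ IsMulCommutative ↥A ∧ A.index ≤ m * n) ∧
    ((∃ K : Subgroup G, (K : Set G).Finite ∧
        ∀ A : Subgroup ↥K, A.Normal → IsMulCommutative ↥A → m ≤ A.index) →
     (∃ K : Subgroup H, (K : Set H).Finite ∧
        ∀ A : Subgroup ↥K, A.Normal → IsMulCommutative ↥A → n ≤ A.index) →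
     ∃ K : Subgroup (G × H), (K : Set (G × H)).Finite ∧
        ∀ A : Subgroup ↥K, A.Normal → IsMulCommutative ↥A → m * n ≤ A.index) := by
  refine ⟨fun K hK ↦ ?_, fun ⟨K₁, hK₁, h₁⟩ ⟨K₂, hK₂, h₂⟩ ↦ ?_⟩
  · have hK₁ : (K.map (MonoidHom.fst G H) : Set G).Finite := by rw [coe_map]; exact hK.image _
    have hK₂ : (K.map (MonoidHom.snd G H) : Set H).Finite := by rw [coe_map]; exact hK.image _
    have : Finite (K.map (MonoidHom.fst G H)) := hK₁.to_subtype
    have : Finite (K.map (MonoidHom.snd G H)) := hK₂.to_subtype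
    obtain ⟨A₁, hA₁, hA₁c, hA₁m⟩ := hG _ hK₁
    obtain ⟨A₂, hA₂, hA₂c, hA₂n⟩ := hH _ hK₂
    obtain ⟨A, hA, hAc, hAmn⟩ :=
      exists_normal_isMulCommutative_index_le_of_injective _ K.toProdMapFstSnd_injective A₁ A₂
    exact ⟨A, hA, hAc, hAmn.trans (Nat.mul_le_mul hA₁m hA₂n)⟩
  · have hK : ((K₁.prod K₂ : Subgroup (G × H)) : Set (G × H)).Finite := by
      rw [coe_prod]; exact hK₁.prod hK₂
    have : Finite K₁ := hK₁.to_subtype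
    have : Finite K₂ := hK₂.to_subtype
    refine ⟨K₁.prod K₂, hK, fun A hA hAc ↦ ?_⟩
    let e := K₁.prodEquiv K₂
    have : (A.map e.toMonoidHom).Normal := hA.map _ e.surjective
    rw [← index_map_equiv A e]
    exact le_index_of_normal_isMulCommutative_prod h₁ h₂ (A.map e.toMonoidHom)
end

section
/- Let G be a finite group and A an abelian subgroup of G. Then there exists a characteristic abelian subgroup N of G such that [G : N] ≤ [G : A]². -/
/-!
Chermak–Delgado: the measure `m(H) = |H| |C_G(H)|` is supermodular on the subgroup lattice, so
the subgroups of maximal measure are closed under `⊓`; they are also closed under taking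
centralizers and under automorphisms. Hence there is a least one, `N`, which is characteristic,
and abelian because `N ≤ C_G(N)`. Comparing measures, `|A|² ≤ m(A) ≤ m(N) ≤ |N| |G|`, which is
`[G : N] ≤ [G : A]²`.
-/

namespace Subgroup

variable {G : Type*} [Group G]

noncomputable def cdMeasure (H : Subgroup G) : ℕ :=
  Nat.card H * Nat.card (centralizer (H : Set G))

def IsCDMax (H : Subgroup G) : Prop :=
  ∀ K : Subgroup G, K.cdMeasure ≤ H.cdMeasure

theorem card_mul_relIndex {H K : Subgroup G} (h : H ≤ K) :
    Nat.card H * H.relIndex K = Nat.card K := by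
  simpa only [relIndex_bot_left] using relIndex_mul_relIndex _ _ _ bot_le h

theorem card_mul_card_le_card_inf_mul_card_sup [Finite G] (H K : Subgroup G) :
    Nat.card H * Nat.card K ≤ Nat.card ↥(H ⊓ K) * Nat.card ↥(H ⊔ K) :=
  calc Nat.card H * Nat.card K
      = Nat.card ↥(H ⊓ K) * K.relIndex H * Nat.card K := by
        rw [← inf_relIndex_left, card_mul_relIndex inf_le_left]
    _ ≤ Nat.card ↥(H ⊓ K) * K.relIndex (H ⊔ K) * Nat.card K := by
        gcongr
        exact relIndex_le_of_le_right le_sup_left (K.subgroupOf (H ⊔ K)).index_ne_zero_of_finite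
    _ = Nat.card ↥(H ⊓ K) * Nat.card ↥(H ⊔ K) := by
        rw [mul_assoc, mul_comm (K.relIndex _), card_mul_relIndex le_sup_right]

theorem cdMeasure_mul_le [Finite G] (H K : Subgroup G) :
    H.cdMeasure * K.cdMeasure ≤ (H ⊓ K).cdMeasure * (H ⊔ K).cdMeasure := by
  set CH := centralizer (H : Set G)
  set CK := centralizer (K : Set G)
  have hinf : CH ⊓ CK ≤ centralizer ((H ⊔ K : Subgroup G) : Set G) :=
    le_centralizer_iff.1 (sup_le (le_centralizer_iff.1 inf_le_left)
      (le_centralizer_iff.1 inf_le_right))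
  have hsup : CH ⊔ CK ≤ centralizer ((H ⊓ K : Subgroup G) : Set G) :=
    sup_le (centralizer_le inf_le_left) (centralizer_le inf_le_right)
  calc H.cdMeasure * K.cdMeasure
      = (Nat.card H * Nat.card K) * (Nat.card CH * Nat.card CK) := by
        unfold cdMeasure; ring
    _ ≤ (Nat.card ↥(H ⊓ K) * Nat.card ↥(H ⊔ K)) * (Nat.card ↥(CH ⊓ CK) * Nat.card ↥(CH ⊔ CK)) :=
        Nat.mul_le_mul (card_mul_card_le_card_inf_mul_card_sup H K)
          (card_mul_card_le_card_inf_mul_card_sup CH CK)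
    _ ≤ (Nat.card ↥(H ⊓ K) * Nat.card ↥(H ⊔ K)) *
          (Nat.card (centralizer ((H ⊔ K : Subgroup G) : Set G)) * Nat.card (centralizer ((H ⊓ K : Subgroup G) : Set G))) := by
        gcongr
        · exact card_le_of_le hinf
        · exact card_le_of_le hsup
    _ = (H ⊓ K).cdMeasure * (H ⊔ K).cdMeasure := by
        unfold cdMeasure; ring

theorem cdMeasure_le_cdMeasure_centralizer [Finite G] (H : Subgroup G) :
    H.cdMeasure ≤ (centralizer (H : Set G)).cdMeasure := by
  rw [cdMeasure, cdMeasure, mul_comm]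
  gcongr
  exact card_le_of_le (le_centralizer_iff.1 le_rfl)

theorem cdMeasure_le_cdMeasure_map {G' : Type*} [Group G'] [Finite G'] {f : G →* G'}
    (hf : Function.Injective f) (H : Subgroup G) :
    H.cdMeasure ≤ (H.map f).cdMeasure := by
  rw [cdMeasure, cdMeasure, card_map_of_injective hf,
    ← card_map_of_injective (K := centralizer (H : Set G)) hf]
  gcongr
  refine card_le_of_le ?_
  rw [coe_map]
  exact map_centralizer_le_centralizer_image _ f

theorem card_sq_le_cdMeasure [Finite G] (A : Subgroup G) [IsMulCommutative A] :
    Nat.card A ^ 2 ≤ A.cdMeasure := by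
  rw [sq, cdMeasure]
  gcongr
  exact card_le_of_le (le_centralizer A)

theorem cdMeasure_le_card_mul_card [Finite G] (H : Subgroup G) :
    H.cdMeasure ≤ Nat.card H * Nat.card G := by
  rw [cdMeasure]
  gcongr
  exact card_le_card_group _

namespace IsCDMax

variable [Finite G] {H K : Subgroup G}

theorem inf (hH : H.IsCDMax) (hK : K.IsCDMax) : (H ⊓ K).IsCDMax := fun L =>
  (hH L).trans <| Nat.le_of_mul_le_mul_right
    ((cdMeasure_mul_le H K).trans (Nat.mul_le_mul_left _ (hK _)))
    (Nat.mul_pos Nat.card_pos Nat.card_pos)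

theorem centralizer (hH : H.IsCDMax) : (centralizer (H : Set G)).IsCDMax := fun L =>
  (hH L).trans (cdMeasure_le_cdMeasure_centralizer H)

theorem map (hH : H.IsCDMax) (φ : G ≃* G) : (H.map φ.toMonoidHom).IsCDMax := fun L =>
  (hH L).trans (cdMeasure_le_cdMeasure_map φ.injective H)

end IsCDMax

theorem exists_isCDMax_forall_le [Finite G] :
    ∃ N : Subgroup G, N.IsCDMax ∧ ∀ K : Subgroup G, K.IsCDMax → N ≤ K := by
  obtain ⟨M, hM⟩ := Finite.exists_max (cdMeasure (G := G))
  obtain ⟨N, hN⟩ := exists_minimal_of_wellFoundedLT IsCDMax ⟨M, hM⟩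
  exact ⟨N, hN.prop, fun K hK =>
    (le_inf_iff.1 (hN.eq_of_le (hN.prop.inf hK) inf_le_left).ge).2⟩

theorem index_le_index_sq_of_card_sq_le [Finite G] {H K : Subgroup G}
    (h : Nat.card K ^ 2 ≤ Nat.card H * Nat.card G) : H.index ≤ K.index ^ 2 := by
  refine Nat.le_of_mul_le_mul_right (c := Nat.card K ^ 2) ?_ (pow_pos Nat.card_pos 2)
  calc H.index * Nat.card K ^ 2
      ≤ H.index * (Nat.card H * Nat.card G) := Nat.mul_le_mul_left _ h
    _ = Nat.card G ^ 2 := by rw [← mul_assoc, mul_comm H.index, card_mul_index, sq]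
    _ = K.index ^ 2 * Nat.card K ^ 2 := by rw [← card_mul_index K]; ring

end Subgroup

/-- A finite group with an abelian subgroup of index k has a
characteristic abelian subgroup of index at most k². -/
theorem exists_characteristic_abelian_of_abelian {G : Type*} [Group G] [Finite G]
    (A : Subgroup G) (hA : IsMulCommutative A) :
    ∃ N : Subgroup G, N.Characteristic ∧ IsMulCommutative N ∧ N.index ≤ A.index ^ 2 := by
  obtain ⟨N, hN, hN_le⟩ := Subgroup.exists_isCDMax_forall_le (G := G)
  refine ⟨N, Subgroup.characteristic_iff_le_map.2 fun φ => hN_le _ (hN.map φ),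
    Subgroup.le_centralizer_iff_isMulCommutative.1 (hN_le _ hN.centralizer),
    Subgroup.index_le_index_sq_of_card_sq_le ?_⟩
  calc Nat.card A ^ 2 ≤ A.cdMeasure := A.card_sq_le_cdMeasure
    _ ≤ N.cdMeasure := hN A
    _ ≤ Nat.card N * Nat.card G := N.cdMeasure_le_card_mul_card
end

section
/- Let H be a group with trivial center, and suppose there is a short exact sequence 1 → H → G → ℤ/mℤ → 0. If there exists g ∈ G mapping to the generator 1 of ℤ/mℤ such that conjugation by g induces an inner automorphism of H, then G is isomorphic to H × ℤ/mℤ. -/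
/-- If H has trivial center, 1 → H → G → ℤ/mℤ → 0 is exact, and some
element of G mapping to the generator 1 acts on H by an inner automorphism, then
G ≅ H × ℤ/mℤ. -/
theorem section_and_direct_product {H G : Type*} [Group H] [Group G] (m : ℕ) (hm : 0 < m)
    (hZ : Subgroup.center H = ⊥)
    (f : H →* G) (hf : Function.Injective f)
    (p : G →* Multiplicative (ZMod m)) (hp : Function.Surjective p)
    (hexact : f.range = p.ker)
    (g : G) (hg : p g = Multiplicative.ofAdd (1 : ZMod m))
    (hinner : ∃ h : H, ∀ x : H, g * f x * g⁻¹ = f (h * x * h⁻¹)) :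
    Nonempty (G ≃* H × Multiplicative (ZMod m)) := by
  haveI : NeZero m := ⟨hm.ne'⟩
  obtain ⟨h, hh⟩ := hinner
  set g' : G := (f h)⁻¹ * g with hg'def
  -- g' commutes with every f x
  have hcomm : ∀ x : H, Commute (f x) g' := by
    intro x
    have h1 : g * f x * g⁻¹ = f h * f x * (f h)⁻¹ := by
      rw [hh x]; simp [mul_assoc]
    have h2 : g' * f x = f x * g' := by
      calc g' * f x = (f h)⁻¹ * (g * f x * g⁻¹ * g) := by rw [hg'def]; group
        _ = (f h)⁻¹ * (f h * f x * (f h)⁻¹ * g) := by rw [h1]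
        _ = f x * g' := by rw [hg'def]; group
    exact h2.symm
  -- p g' = ofAdd 1
  have hpfh : p (f h) = 1 := by
    have : f h ∈ p.ker := hexact ▸ ⟨h, rfl⟩
    exact this
  have hpg' : p g' = Multiplicative.ofAdd (1 : ZMod m) := by
    rw [hg'def, map_mul, map_inv, hpfh, hg]; simp
  have hpg'pow : ∀ n : ℕ, p (g' ^ n) = Multiplicative.ofAdd ((n : ZMod m)) := by
    intro n
    rw [map_pow, hpg']
    induction n with
    | zero => simp
    | succ k ih => rw [pow_succ, ih, ← ofAdd_add]; push_cast; ring_nf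
  -- g' ^ m = 1
  have hg'm : g' ^ m = 1 := by
    have hker : g' ^ m ∈ p.ker := by
      have := hpg'pow m
      simp only [ZMod.natCast_self] at this
      simpa [MonoidHom.mem_ker] using this
    rw [← hexact] at hker
    obtain ⟨z, hz⟩ := hker
    have hzc : z ∈ Subgroup.center H := by
      rw [Subgroup.mem_center_iff]
      intro x
      apply hf
      rw [map_mul, map_mul, hz]
      exact ((hcomm x).pow_right m).eq
    rw [hZ, Subgroup.mem_bot] at hzc
    rw [← hz, hzc, map_one]
  have hpow_mod : ∀ n : ℕ, g' ^ (n % m) = g' ^ n := by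
    intro n
    conv_rhs => rw [← Nat.div_add_mod n m]
    rw [pow_add, pow_mul, hg'm, one_pow, one_mul]
  -- homomorphism from Multiplicative (ZMod m)
  let φ : Multiplicative (ZMod m) →* G :=
    { toFun := fun k => g' ^ (Multiplicative.toAdd k).val
      map_one' := by simp
      map_mul' := by
        intro a b
        show g' ^ (Multiplicative.toAdd a + Multiplicative.toAdd b).val
            = g' ^ (Multiplicative.toAdd a).val * g' ^ (Multiplicative.toAdd b).val
        rw [ZMod.val_add, hpow_mod, pow_add] }
  have hφ : ∀ k, φ k = g' ^ (Multiplicative.toAdd k).val := fun _ => rfl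
  have hpφ : ∀ k, p (φ k) = k := by
    intro k
    rw [hφ, hpg'pow, ZMod.natCast_val, ZMod.cast_id]
    rfl
  let ψ : H × Multiplicative (ZMod m) →* G :=
    MonoidHom.noncommCoprod f φ (fun x k => (hcomm x).pow_right _)
  have hψ : ∀ x k, ψ (x, k) = f x * φ k := fun _ _ => rfl
  have hbij : Function.Bijective ψ := by
    constructor
    · rw [← MonoidHom.ker_eq_bot_iff, Subgroup.eq_bot_iff_forall]
      rintro ⟨x, k⟩ hxk
      have hxk' : f x * φ k = 1 := hxk
      have hk : k = 1 := by
        have := congrArg p hxk'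
        rw [map_mul, map_one] at this
        have hpfx : p (f x) = 1 := by
          have : f x ∈ p.ker := hexact ▸ ⟨x, rfl⟩
          exact this
        rwa [hpfx, one_mul, hpφ] at this
      rw [hk, map_one, mul_one] at hxk'
      have hx : x = 1 := hf (by rw [hxk', map_one])
      rw [hx, hk]
      rfl
    · intro y
      set k := p y with hk
      have : y * (φ k)⁻¹ ∈ p.ker := by
        rw [MonoidHom.mem_ker, map_mul, map_inv, hpφ, ← hk, mul_inv_cancel]
      rw [← hexact] at this
      obtain ⟨x, hx⟩ := this
      refine ⟨(x, k), ?_⟩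
      rw [hψ, hx]
      group
  exact ⟨(MulEquiv.ofBijective ψ hbij).symm⟩
end

section
/- Let K be a field of characteristic 0 and let ξ_m be a primitive m-th root of unity in an algebraic closure of K. Then PGL₂(K) contains a subgroup isomorphic to ℤ/mℤ if and only if ξ_m + ξ_m⁻¹ ∈ K. -/
/-!
Lift an element of `PGL₂(K)` to `U ∈ GL₂(K)` with eigenvalues `α, β` in `K̄`. Since
`(U - β)(U - α) = 0`, one has `Uⁿ = (∑ αⁱ βⁿ⁻¹⁻ⁱ) (U - α) + αⁿ`, so for non-scalar `U` the
power `Uⁿ` is scalar exactly when this geometric sum vanishes. For `α ≠ β` this says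
`(α / β)ⁿ = 1`: the class of `U` has the order of `ζ = α / β`, and `ζ + ζ⁻¹ = tr² / det - 2` lies
in `K`. For `α = β` the sum is `n αⁿ⁻¹`, which does not vanish at the order `n = m`, because a
primitive `m`-th root of unity in `K̄` makes `m` invertible. Every primitive `m`-th root is a
power `ζᵏ`, and `ζᵏ + ζ⁻ᵏ` is a Chebyshev polynomial in `ζ + ζ⁻¹`. Conversely, `ξ + 1` and
`ξ⁻¹ + 1` have ratio `ξ` and sum and product `ξ + ξ⁻¹ + 2 ∈ K`, so they are the eigenvalues of a
companion matrix over `K`.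
-/

/-- The projective general linear group PGL₂(K). -/
abbrev PGL2 (K : Type*) [Field K] :=
  GL (Fin 2) K ⧸ Subgroup.center (GL (Fin 2) K)

open Polynomial Matrix

theorem Polynomial.Chebyshev.C_eval_add_inv {L : Type*} [Field L] {x : L} (hx : x ≠ 0) (n : ℤ) :
    (C L n).eval (x + x⁻¹) = x ^ n + x ^ (-n) := by
  induction n using Polynomial.Chebyshev.induct' with
  | zero => norm_num
  | one => simp
  | add_two n h1 h0 =>
    rw [C_add_two, eval_sub, eval_mul, eval_X, h1, h0]
    simp only [zpow_add₀ hx, _root_.zpow_neg, zpow_natCast, zpow_one, neg_add]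
    field_simp
    ring
  | neg n h => rw [C_neg, h, neg_neg, add_comm]

theorem pow_add_inv_pow_mem_range_algebraMap {K L : Type*} [Field K] [Field L] [Algebra K L]
    {ζ : L} (hζ : ζ ≠ 0) (h : ζ + ζ⁻¹ ∈ Set.range (algebraMap K L)) (n : ℕ) :
    ζ ^ n + (ζ ^ n)⁻¹ ∈ Set.range (algebraMap K L) := by
  obtain ⟨c, hc⟩ := h
  refine ⟨(Chebyshev.C K n).eval c, ?_⟩
  rw [Chebyshev.algebraMap_eval_C, hc, Chebyshev.C_eval_add_inv hζ, _root_.zpow_neg,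
    zpow_natCast]

theorem IsAlgClosed.exists_add_eq_and_mul_eq {L : Type*} [Field L] [IsAlgClosed L] (s p : L) :
    ∃ α β : L, s = α + β ∧ p = α * β := by
  obtain ⟨α, hα⟩ := IsAlgClosed.exists_root (X ^ 2 - C s * X + C p) (by
    rw [show (X ^ 2 - C s * X + C p : L[X]).degree = 2 by compute_degree!]; decide)
  refine ⟨α, s - α, by ring, ?_⟩
  simp only [IsRoot, eval_add, eval_sub, eval_pow, eval_mul, eval_X, eval_C] at hα
  linear_combination hα

theorem exists_subgroup_mulEquiv_zmod_iff {G : Type*} [Group G] {m : ℕ} :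
    (∃ H : Subgroup G, Nonempty (H ≃* Multiplicative (ZMod m))) ↔ ∃ g : G, orderOf g = m := by
  constructor
  · rintro ⟨H, ⟨e⟩⟩
    refine ⟨e.symm (.ofAdd 1), ?_⟩
    rw [Subgroup.orderOf_coe, MulEquiv.orderOf_eq, orderOf_ofAdd_eq_addOrderOf,
      ZMod.addOrderOf_one]
  · rintro ⟨g, rfl⟩
    exact ⟨.zpowers g, ⟨Nat.card_zpowers g ▸ (zmodCyclicMulEquiv inferInstance).symm⟩⟩

theorem pow_eq_geom_sum₂_smul_sub_add {R A : Type*} [CommRing R] [Ring A] [Algebra R A] {x : A}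
    {α β : R} (hx : (x - algebraMap R A β) * (x - algebraMap R A α) = 0) (n : ℕ) :
    x ^ n = (∑ i ∈ Finset.range n, α ^ i * β ^ (n - 1 - i)) • (x - algebraMap R A α) +
      algebraMap R A (α ^ n) := by
  induction n with
  | zero => simp
  | succ n ih =>
    have hβ : x * (x - algebraMap R A α) = β • (x - algebraMap R A α) := by
      rw [Algebra.smul_def, ← sub_eq_zero, ← sub_mul, hx]
    rw [pow_succ', ih, Nat.add_sub_cancel, geom_sum₂_succ_eq, mul_add, mul_smul_comm, hβ,
      ← Algebra.commutes, ← Algebra.smul_def]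
    simp only [Algebra.algebraMap_eq_smul_one]
    module

theorem pow_mem_range_algebraMap_iff {L A : Type*} [Field L] [Ring A] [Algebra L A] {x : A}
    (hx : x ∉ Set.range (algebraMap L A)) {α β : L}
    (hαβ : (x - algebraMap L A β) * (x - algebraMap L A α) = 0) (n : ℕ) :
    x ^ n ∈ Set.range (algebraMap L A) ↔ ∑ i ∈ Finset.range n, α ^ i * β ^ (n - 1 - i) = 0 := by
  rw [pow_eq_geom_sum₂_smul_sub_add hαβ n]
  set G := ∑ i ∈ Finset.range n, α ^ i * β ^ (n - 1 - i)
  refine ⟨fun h ↦ by_contra fun hG ↦ hx ?_, fun hG ↦ ⟨α ^ n, by rw [hG, zero_smul, zero_add]⟩⟩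
  simp only [← Algebra.mem_bot] at h ⊢
  have hsub := Subalgebra.smul_mem _
    (Subalgebra.sub_mem _ h (Subalgebra.algebraMap_mem _ (α ^ n))) G⁻¹
  rw [add_sub_cancel_right, smul_smul, inv_mul_cancel₀ hG, one_smul] at hsub
  simpa using Subalgebra.add_mem _ hsub (Subalgebra.algebraMap_mem _ α)

namespace Matrix

theorem map_mem_range_scalar_iff {n K L : Type*} [Fintype n] [DecidableEq n] [Ring K] [Ring L]
    {f : K →+* L} (hf : Function.Injective f) {M : Matrix n n K} :
    M.map f ∈ Set.range (scalar n) ↔ M ∈ Set.range (scalar n) := by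
  refine ⟨fun ⟨a, ha⟩ ↦ ?_, fun ⟨a, ha⟩ ↦ ⟨f a, by simp [← ha, diagonal_map]⟩⟩
  cases isEmpty_or_nonempty n with
  | inl _ => exact ⟨0, Subsingleton.elim _ _⟩
  | inr h =>
    obtain ⟨i⟩ := h
    refine ⟨M i i, map_injective hf ?_⟩
    have hai : a = f (M i i) := by simpa using congr($ha i i)
    simp [← ha, hai, diagonal_map]

variable {R : Type*} [CommRing R] {B : Matrix (Fin 2) (Fin 2) R} {α β : R}

theorem sub_algebraMap_mul_sub_algebraMap_eq_zero (htr : B.trace = α + β)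
    (hdet : B.det = α * β) : (B - algebraMap R _ β) * (B - algebraMap R _ α) = 0 := by
  nontriviality R
  have hB := aeval_self_charpoly B
  rw [charpoly_fin_two, htr, hdet, show X ^ 2 - C (α + β) * X + C (α * β) = (X - C β) * (X - C α)
    by simp only [map_add, map_mul]; ring] at hB
  simpa using hB

theorem notMem_range_algebraMap_of_ne [NoZeroDivisors R] (htr : B.trace = α + β)
    (hdet : B.det = α * β) (hαβ : α ≠ β) : B ∉ Set.range (algebraMap R _) := by
  rintro ⟨c, rfl⟩
  have htr2 : α + β = 2 * c := by simp [← htr, trace_fin_two, algebraMap_matrix_apply, two_mul]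
  have hdet2 : α * β = c * c := by simp [← hdet, det_fin_two, algebraMap_matrix_apply]
  refine hαβ (sub_eq_zero.mp (pow_eq_zero_iff two_ne_zero |>.mp ?_))
  linear_combination (α + β + 2 * c) * htr2 - 4 * hdet2

end Matrix

namespace PGL2

variable {K L : Type*} [Field K] [Field L] [Algebra K L]

variable (L) in
theorem mk_pow_eq_one_iff (U : GL (Fin 2) K) (n : ℕ) :
    (QuotientGroup.mk U : PGL2 K) ^ n = 1 ↔
      (U.val.map (algebraMap K L)) ^ n ∈ Set.range (algebraMap L (Matrix (Fin 2) (Fin 2) L)) := by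
  rw [← QuotientGroup.mk_pow, QuotientGroup.eq_one_iff,
    GeneralLinearGroup.mem_center_iff_val_mem_range_scalar, Units.val_pow_eq_pow_val,
    ← map_mem_range_scalar_iff (algebraMap K L).injective, Matrix.map_pow]
  rfl

theorem orderOf_mk_eq_orderOf_div (U : GL (Fin 2) K) {α β : L} (hαβ : α ≠ β)
    (htr : (U.val.map (algebraMap K L)).trace = α + β)
    (hdet : (U.val.map (algebraMap K L)).det = α * β) :
    orderOf (QuotientGroup.mk U : PGL2 K) = orderOf (α / β) := by
  have hβ : β ≠ 0 :=
    right_ne_zero_of_mul (hdet ▸ (GeneralLinearGroup.map (algebraMap K L) U).det_ne_zero)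
  refine orderOf_eq_orderOf_iff.mpr fun n ↦ ?_
  rw [mk_pow_eq_one_iff L,
    pow_mem_range_algebraMap_iff (notMem_range_algebraMap_of_ne htr hdet hαβ)
      (sub_algebraMap_mul_sub_algebraMap_eq_zero htr hdet) n, div_pow,
    div_eq_one_iff_eq (pow_ne_zero _ hβ), ← sub_eq_zero (a := α ^ n), ← geom_sum₂_mul,
    mul_eq_zero, or_iff_left (sub_ne_zero.mpr hαβ)]

theorem exists_orderOf_eq_orderOf_div {α β : L} (hαβ : α ≠ β) {t d : K} (hd : d ≠ 0)
    (ht : algebraMap K L t = α + β) (hd' : algebraMap K L d = α * β) :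
    ∃ g : PGL2 K, orderOf g = orderOf (α / β) := by
  have hdet : (!![0, -d; 1, t]).det = d := by simp [det_fin_two]
  refine ⟨QuotientGroup.mk (GeneralLinearGroup.mkOfDetNeZero _ (hdet ▸ hd)),
    orderOf_mk_eq_orderOf_div _ hαβ ?_ ?_⟩
  · simpa [trace_fin_two] using ht
  · simpa [det_fin_two] using hd'

theorem exists_orderOf_eq_of_add_inv_mem_range {ζ : L} (hζ0 : ζ ≠ 0) (hζ1 : ζ ≠ 1)
    (h : ζ + ζ⁻¹ ∈ Set.range (algebraMap K L)) : ∃ g : PGL2 K, orderOf g = orderOf ζ := by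
  obtain ⟨c, hc⟩ := h
  by_cases hζ : ζ = -1
  · -- `ζ + 1 = 0` here, so take the eigenvalues `1` and `-1` instead
    subst hζ
    have h1 : (1 : L) ≠ -1 := fun h ↦ hζ1 h.symm
    simpa using exists_orderOf_eq_orderOf_div h1 (t := 0) (d := -1) (by simp) (by simp) (by simp)
  have hζ' : ζ + 1 ≠ 0 := fun h ↦ hζ (eq_neg_of_add_eq_zero_left h)
  have hζinv : ζ⁻¹ + 1 ≠ 0 := by
    rw [← mul_ne_zero_iff_left hζ0]; field_simp; rwa [add_comm]
  have hαβ : ζ + 1 ≠ ζ⁻¹ + 1 := by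
    intro h
    have hsq : (ζ - 1) * (ζ + 1) = 0 := by field_simp at h; linear_combination h
    rcases mul_eq_zero.mp hsq with h | h
    exacts [hζ1 (sub_eq_zero.mp h), hζ' h]
  have hsum : algebraMap K L (c + 2) = (ζ + 1) * (ζ⁻¹ + 1) := by
    rw [map_add, hc, map_ofNat]; field_simp; ring
  have hd : c + 2 ≠ 0 := by
    rw [← (algebraMap K L).injective.ne_iff, hsum, map_zero]; exact mul_ne_zero hζ' hζinv
  have hdiv : (ζ + 1) / (ζ⁻¹ + 1) = ζ := by
    rw [div_eq_iff hζinv, mul_add, mul_inv_cancel₀ hζ0, mul_one, add_comm]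
  rw [← hdiv]
  exact exists_orderOf_eq_orderOf_div hαβ hd (by rw [hsum]; field_simp; ring) hsum

theorem eigenvalue_ne_of_mk_ne_one (U : GL (Fin 2) K) (hU : (QuotientGroup.mk U : PGL2 K) ≠ 1)
    (hm : (orderOf (QuotientGroup.mk U : PGL2 K) : L) ≠ 0) {α β : L}
    (htr : (U.val.map (algebraMap K L)).trace = α + β)
    (hdet : (U.val.map (algebraMap K L)).det = α * β) : α ≠ β := by
  rintro rfl
  have hα : α ≠ 0 :=
    left_ne_zero_of_mul (hdet ▸ (GeneralLinearGroup.map (algebraMap K L) U).det_ne_zero)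
  have hB : U.val.map (algebraMap K L) ∉ Set.range (algebraMap L _) := fun hB ↦
    hU (pow_one (QuotientGroup.mk U : PGL2 K) ▸ (mk_pow_eq_one_iff L U 1).mpr (by simpa using hB))
  have hsum := (pow_mem_range_algebraMap_iff hB
    (sub_algebraMap_mul_sub_algebraMap_eq_zero htr hdet) _).mp
    ((mk_pow_eq_one_iff L U _).mp (pow_orderOf_eq_one _))
  rw [geom_sum₂_self] at hsum
  exact mul_ne_zero hm (pow_ne_zero _ hα) hsum

theorem exists_isPrimitiveRoot_add_inv_mem_range [IsAlgClosed L] {g : PGL2 K} {m : ℕ}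
    (hg : orderOf g = m) (hm : (m : L) ≠ 0) :
    ∃ ζ : L, IsPrimitiveRoot ζ m ∧ ζ + ζ⁻¹ ∈ Set.range (algebraMap K L) := by
  obtain ⟨U, rfl⟩ := QuotientGroup.mk_surjective g
  set B := U.val.map (algebraMap K L)
  obtain ⟨α, β, htr, hdet⟩ := IsAlgClosed.exists_add_eq_and_mul_eq B.trace B.det
  rcases eq_or_ne (QuotientGroup.mk U : PGL2 K) 1 with hU | hU
  · rw [hU, orderOf_one] at hg
    exact ⟨1, hg ▸ IsPrimitiveRoot.one, 2, by norm_num [map_ofNat]⟩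
  have hαβ := eigenvalue_ne_of_mk_ne_one U hU (hg ▸ hm) htr hdet
  obtain ⟨hα, hβ⟩ :=
    mul_ne_zero_iff.mp (hdet ▸ (GeneralLinearGroup.map (algebraMap K L) U).det_ne_zero)
  refine ⟨α / β, hg ▸ orderOf_mk_eq_orderOf_div U hαβ htr hdet ▸ IsPrimitiveRoot.orderOf _,
    U.val.trace ^ 2 / U.val.det - 2, ?_⟩
  rw [map_sub, map_div₀, map_pow, AddMonoidHom.map_trace, RingHom.map_det, map_ofNat]
  change (B.trace ^ 2 / B.det - 2) = _
  rw [htr, hdet]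
  field_simp
  ring

end PGL2

theorem pgl2_contains_cyclic_iff_general (K : Type*) [Field K]
    (m : ℕ) (hm : 0 < m)
    (ξ : AlgebraicClosure K) (hξ : IsPrimitiveRoot ξ m) :
    (∃ H : Subgroup (PGL2 K), Nonempty (↥H ≃* Multiplicative (ZMod m))) ↔
      ξ + ξ⁻¹ ∈ Set.range (algebraMap K (AlgebraicClosure K)) := by
  have : NeZero m := ⟨hm.ne'⟩
  rw [exists_subgroup_mulEquiv_zmod_iff]
  constructor
  · rintro ⟨g, hg⟩
    obtain ⟨ζ, hζ, hζK⟩ := PGL2.exists_isPrimitiveRoot_add_inv_mem_range hg hξ.neZero'.ne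
    obtain ⟨i, -, rfl⟩ := hζ.eq_pow_of_pow_eq_one hξ.pow_eq_one
    exact pow_add_inv_pow_mem_range_algebraMap (hζ.ne_zero hm.ne') hζK i
  · intro hξK
    obtain rfl | hm1 := eq_or_ne m 1
    · exact ⟨1, orderOf_one⟩
    obtain ⟨g, hg⟩ := PGL2.exists_orderOf_eq_of_add_inv_mem_range (hξ.ne_zero hm.ne')
      (hξ.ne_one (by omega)) hξK
    exact ⟨g, hg.trans hξ.eq_orderOf.symm⟩

/-- For K of characteristic 0 and ξ a primitive m-th root of unity in
the algebraic closure of K, PGL₂(K) contains a subgroup isomorphic to ℤ/mℤ iff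
ξ + ξ⁻¹ ∈ K. -/
theorem pgl2_contains_cyclic_iff (K : Type*) [Field K] [CharZero K]
    (m : ℕ) (hm : 0 < m)
    (ξ : AlgebraicClosure K) (hξ : IsPrimitiveRoot ξ m) :
    (∃ H : Subgroup (PGL2 K), Nonempty (↥H ≃* Multiplicative (ZMod m))) ↔
      ξ + ξ⁻¹ ∈ Set.range (algebraMap K (AlgebraicClosure K)) :=
  pgl2_contains_cyclic_iff_general K m hm ξ hξ
end
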